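/- arXiv:2004.11635 — 3 statements merged into one kernel-verified Lean document; each statement's English description precedes it below -/
import Mathlib

section
/- Let d ≥ 1, let Γ ⊆ ℕ^{1+d} be an admissible graded subsemigroup, and let K be a compact convex subset of ℝ^d contained in the interior of Δ(Γ). Then there exists M such that for all integers m ≥ M, K ∩ {α/m : α ∈ Γ_m} = K ∩ {β/m : β ∈ ℤ^d}. -/
open scoped BigOperators
open Filter MeasureTheory

/-- Points of `ℕ^{1+d}`, written as a degree together with a vector in `ℕ^d`. -/
abbrev NPt (d : ℕ) := ℕ × (Fin d → ℕ)

/-- A subset of `ℕ^{1+d}` is a (graded) subsemigroup if it is closed under addition. -/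
def IsGradedSubsemigroup {d : ℕ} (Γ : Set (NPt d)) : Prop :=
  ∀ x ∈ Γ, ∀ y ∈ Γ, x + y ∈ Γ

/-- Linear growth: there is `C > 0` with `|α|₁ ≤ C·m` for all `(m, α) ∈ Γ`. -/
def HasLinearGrowth {d : ℕ} (Γ : Set (NPt d)) : Prop :=
  ∃ C : ℝ, 0 < C ∧ ∀ p ∈ Γ, (∑ i, (p.2 i : ℝ)) ≤ C * p.1

/-- The canonical embedding `ℕ^{1+d} → ℤ^{1+d}`. -/
def nptToInt {d : ℕ} (p : NPt d) : ℤ × (Fin d → ℤ) :=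
  ((p.1 : ℤ), fun i => (p.2 i : ℤ))

/-- `Γ` generates `ℤ^{1+d}` as a group. -/
def GeneratesFullLattice {d : ℕ} (Γ : Set (NPt d)) : Prop :=
  AddSubgroup.closure (nptToInt '' Γ) = ⊤

/-- An admissible graded subsemigroup of `ℕ^{1+d}`. -/
def IsAdmissible {d : ℕ} (Γ : Set (NPt d)) : Prop :=
  IsGradedSubsemigroup Γ ∧ HasLinearGrowth Γ ∧ GeneratesFullLattice Γ

/-- The canonical embedding `ℕ^{1+d} → ℝ^{1+d}`. -/
def nptToReal {d : ℕ} (p : NPt d) : ℝ × (Fin d → ℝ) :=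
  ((p.1 : ℝ), fun i => (p.2 i : ℝ))

/-- The convex cone generated by a subset `S` of a real vector space: the set of finite
nonnegative linear combinations of elements of `S`. -/
def coneGen {E : Type*} [AddCommMonoid E] [Module ℝ E] (S : Set E) : Set E :=
  {y | ∃ (n : ℕ) (c : Fin n → ℝ) (p : Fin n → E),
    (∀ i, 0 ≤ c i) ∧ (∀ i, p i ∈ S) ∧ y = ∑ i, c i • p i}

/-- The Okounkov body of a subset `Σ ⊆ ℕ^{1+d}`: the slice at height `1` of the closed convex
cone generated by `Σ` in `ℝ^{1+d}`. -/
def okounkovBody {d : ℕ} (S : Set (NPt d)) : Set (Fin d → ℝ) :=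
  {x | ((1 : ℝ), x) ∈ closure (coneGen (nptToReal '' S))}

/-- The graded piece `Γ_m` of `Γ ⊆ ℕ^{1+d}`. -/
def gradedPiece {d : ℕ} (Γ : Set (NPt d)) (m : ℕ) : Set (Fin d → ℕ) :=
  {α | (m, α) ∈ Γ}

/-- The superlevel semigroup `Γ^{Φ,≥t}` of a function `Φ` on `Γ`. -/
def superlevel {d : ℕ} (Γ : Set (NPt d)) (Φ : NPt d → ℝ) (t : ℝ) : Set (NPt d) :=
  {p ∈ Γ | p.1 * t ≤ Φ p}

/-- `θ = limsup_{n → ∞} sup_{α ∈ Γ_n} Φ(n,α)/n`. -/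
noncomputable def thetaSup {d : ℕ} (Γ : Set (NPt d)) (Φ : NPt d → ℝ) : ℝ :=
  Filter.limsup (fun n : ℕ => sSup {r | ∃ α, (n, α) ∈ Γ ∧ r = Φ (n, α) / n}) Filter.atTop

/-!
Every lattice point `(m, β)` with `β / m ∈ K` has to be shown to lie in `Γ` once `m` is large.
The slice `{1} × K` is a compact subset of the interior of the convex cone spanned by `Γ`, so
(by finite-dimensionality and compactness) a whole `δ`-neighbourhood of it lies in the cone
spanned by a finite set `F ⊆ Γ`. As `Γ` generates `ℤ^{1+d}`, some `b ∈ Γ` satisfies `w + k b ∈ Γ`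
for every integer vector `w` of sup-norm `< k`. For large `m` the point `(m, β) - k b` is still in
the cone over `F`; writing it as `∑ c_g g` and splitting off `∑ ⌊c_g⌋ g` leaves an integer
remainder `w` of norm at most `∑ ‖g‖ < k`, whence `(m, β) = ∑ ⌊c_g⌋ g + (w + k b) ∈ Γ`.
-/

open Set Metric
open scoped NNReal

section Cone

variable {E : Type*} [AddCommGroup E] [Module ℝ E]

theorem coneGen_eq_hull (S : Set E) : coneGen S = PointedCone.hull ℝ S := by
  ext y
  rw [SetLike.mem_coe, Submodule.mem_span_set']
  constructor
  · rintro ⟨n, c, p, hc, hp, rfl⟩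
    exact ⟨n, fun i => ⟨c i, hc i⟩, fun i => ⟨p i, hp i⟩, by simp⟩
  · rintro ⟨n, c, p, rfl⟩
    exact ⟨n, fun i => c i, fun i => p i, fun i => (c i).2, fun i => (p i).2, by simp⟩

theorem PointedCone.mem_hull_image_iff_exists_finset {L : Type*} {v : L → E} {S : Set L}
    {x : E} : x ∈ PointedCone.hull ℝ (v '' S) ↔
      ∃ F : Finset L, (F : Set L) ⊆ S ∧ x ∈ PointedCone.hull ℝ (v '' (F : Set L)) := by
  constructor
  · intro hx
    obtain ⟨F, hF, c, rfl⟩ := (Submodule.mem_span_image_iff_exists_fun ℝ≥0).1 hx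
    exact ⟨F, hF, (Submodule.mem_span_image_finset_iff_exists_fun ℝ≥0).2 ⟨c, rfl⟩⟩
  · rintro ⟨F, hF, hx⟩
    exact Submodule.span_mono (image_mono hF) hx

end Cone

section FiniteDimensional

variable {E : Type*} [NormedAddCommGroup E] [NormedSpace ℝ E] [FiniteDimensional ℝ E]

theorem Convex.interior_closure_eq_interior {C : Set E} (hC : Convex ℝ C) :
    interior (closure C) = interior C := by
  rcases (interior C).eq_empty_or_nonempty with h | h
  · have hspan : affineSpan ℝ (closure C) = affineSpan ℝ C :=
      le_antisymm (affineSpan_le.2 <| closure_minimal (subset_affineSpan ℝ C)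
          (AffineSubspace.closed_of_finiteDimensional _)) (affineSpan_mono ℝ subset_closure)
    rw [h, ← not_nonempty_iff_eq_empty, hC.closure.interior_nonempty_iff_affineSpan_eq_top,
      hspan, ← hC.interior_nonempty_iff_affineSpan_eq_top, h]
    exact not_nonempty_empty
  · exact hC.interior_closure_eq_interior_of_nonempty_interior h

theorem IsOpen.exists_finite_subset_mem_interior_convexHull {U : Set E} (hU : IsOpen U)
    {z : E} (hz : z ∈ U) : ∃ T ⊆ U, T.Finite ∧ z ∈ interior (convexHull ℝ T) := by
  obtain ⟨r, hr, hball⟩ := Metric.isOpen_iff.1 hU z hz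
  obtain ⟨t, htball, ht, hspan⟩ :=
    isOpen_ball.exists_subset_affineIndependent_span_eq_top ⟨z, mem_ball_self hr⟩
  obtain ⟨w, hw⟩ := interior_convexHull_nonempty_iff_affineSpan_eq_top.2 hspan
  have hwball : w ∈ ball z r :=
    (convex_ball z r).convexHull_subset_iff.2 htball (interior_subset hw)
  -- `z` is the midpoint of `w` and its reflection `2 • z - w`, which lies in the same ball
  have hw' : 2 • z - w ∈ ball z r := by
    rwa [mem_ball, dist_eq_norm, show 2 • z - w - z = z - w by abel, ← dist_eq_norm']
  refine ⟨insert (2 • z - w) t, insert_subset (hball hw') (htball.trans hball),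
    (finite_set_of_fin_dim_affineIndependent ℝ ht).insert _, ?_⟩
  have hmid := (convex_convexHull ℝ (insert (2 • z - w) t)).combo_interior_self_mem_interior
    (interior_mono (convexHull_mono (subset_insert _ _)) hw)
    (subset_convexHull ℝ _ (mem_insert _ _)) (by norm_num : (0 : ℝ) < 1 / 2)
    (by norm_num : (0 : ℝ) ≤ 1 / 2) (by norm_num)
  rwa [show (1 / 2 : ℝ) • w + (1 / 2 : ℝ) • (2 • z - w) = z by module] at hmid

variable {L : Type*} {v : L → E} {S : Set L}

theorem PointedCone.exists_finset_mem_interior_hull_image {z : E}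
    (hz : z ∈ interior (PointedCone.hull ℝ (v '' S) : Set E)) :
    ∃ F : Finset L, (F : Set L) ⊆ S ∧
      z ∈ interior (PointedCone.hull ℝ (v '' (F : Set L)) : Set E) := by
  classical
  obtain ⟨T, hTS, hT, hzT⟩ := isOpen_interior.exists_finite_subset_mem_interior_convexHull hz
  have hTF : ∀ t ∈ T, ∃ F : Finset L, (F : Set L) ⊆ S ∧ t ∈ PointedCone.hull ℝ (v '' F) :=
    fun t ht => mem_hull_image_iff_exists_finset.1 (interior_subset (hTS ht))
  choose! FT hFTS hFT using hTF
  refine ⟨hT.toFinset.biUnion FT, ?_, interior_mono ?_ hzT⟩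
  · simpa using fun t ht => hFTS t ht
  refine (convex (PointedCone.hull ℝ _)).convexHull_subset_iff.2 fun t ht =>
    Submodule.span_mono (image_mono ?_) (hFT t ht)
  exact Finset.coe_subset.2 (Finset.subset_biUnion_of_mem FT (hT.mem_toFinset.2 ht))

theorem IsCompact.exists_finset_thickening_subset_hull_image {K : Set E} (hK : IsCompact K)
    (hKS : K ⊆ interior (PointedCone.hull ℝ (v '' S))) :
    ∃ F : Finset L, (F : Set L) ⊆ S ∧
      ∃ δ > 0, thickening δ K ⊆ PointedCone.hull ℝ (v '' (F : Set L)) := by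
  classical
  have : Nonempty {F : Finset L // (F : Set L) ⊆ S} := ⟨⟨∅, by simp⟩⟩
  obtain ⟨⟨F, hFS⟩, hKF⟩ := hK.elim_directed_cover
    (fun F : {F : Finset L // (F : Set L) ⊆ S} =>
      interior (PointedCone.hull ℝ (v '' (F : Set L)) : Set E))
    (fun _ => isOpen_interior)
    (fun z hz => mem_iUnion.2 <| by
      obtain ⟨F, hFS, hzF⟩ := PointedCone.exists_finset_mem_interior_hull_image (hKS hz)
      exact ⟨⟨F, hFS⟩, hzF⟩)
    (fun F G => ⟨⟨F.1 ∪ G.1, by simpa using And.intro F.2 G.2⟩,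
      interior_mono (Submodule.span_mono (image_mono (by simp))),
      interior_mono (Submodule.span_mono (image_mono (by simp)))⟩)
  obtain ⟨δ, hδ, hthick⟩ := hK.exists_thickening_subset_open isOpen_interior hKF
  exact ⟨F, hFS, δ, hδ, hthick.trans interior_subset⟩

end FiniteDimensional

theorem mem_interior_of_mem_interior_slice {V : Type*} [NormedAddCommGroup V] [NormedSpace ℝ V]
    {C : Set (ℝ × V)} (hC : ∀ t : ℝ, 0 < t → ∀ p ∈ C, t • p ∈ C) {x : V}
    (hx : x ∈ interior {y | ((1 : ℝ), y) ∈ C}) : ((1 : ℝ), x) ∈ interior C := by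
  have hU : IsOpen ({p : ℝ × V | 0 < p.1} ∩
      (fun p => p.1⁻¹ • p.2) ⁻¹' interior {y | ((1 : ℝ), y) ∈ C}) :=
    ((continuous_fst.continuousOn.inv₀ fun _ hp => ne_of_gt hp).smul
      continuous_snd.continuousOn).isOpen_inter_preimage
      (isOpen_lt continuous_const continuous_fst) isOpen_interior
  refine interior_maximal ?_ hU ⟨by simp, by simpa using hx⟩
  rintro ⟨s, y⟩ ⟨hs, hy⟩
  have h1 : s⁻¹ • y ∈ {y | ((1 : ℝ), y) ∈ C} := interior_subset hy
  simpa [smul_smul, (ne_of_gt hs : s ≠ 0)] using hC s hs _ h1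

section Semigroup

variable {G : Type*} [AddCommGroup G] {S : Set G}

theorem add_mem_of_mem_of_mem_closure (hS : ∀ x ∈ S, ∀ y ∈ S, x + y ∈ S) {x y : G}
    (hx : x ∈ S) (hy : y ∈ AddSubmonoid.closure S) : x + y ∈ S := by
  induction hy using AddSubmonoid.closure_induction generalizing x with
  | mem y hy => exact hS x hx y hy
  | zero => simpa using hx
  | add y y' _ _ ih ih' => simpa only [add_assoc] using ih' (ih hx)

theorem exists_sub_eq_of_closure_eq_top (hS_top : AddSubgroup.closure S = ⊤) (g : G) :
    ∃ a ∈ AddSubmonoid.closure S, ∃ a' ∈ AddSubmonoid.closure S, a - a' = g := by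
  have hg : g ∈ AddSubgroup.closure S := hS_top ▸ AddSubgroup.mem_top g
  induction hg using AddSubgroup.closure_induction with
  | mem g hg => exact ⟨g, AddSubmonoid.subset_closure hg, 0, zero_mem _, sub_zero g⟩
  | zero => exact ⟨0, zero_mem _, 0, zero_mem _, sub_zero 0⟩
  | add g g' _ _ ih ih' =>
    obtain ⟨a, ha, a', ha', rfl⟩ := ih
    obtain ⟨b, hb, b', hb', rfl⟩ := ih'
    exact ⟨a + b, add_mem ha hb, a' + b', add_mem ha' hb', by abel⟩
  | neg g _ ih =>
    obtain ⟨a, ha, a', ha', rfl⟩ := ih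
    exact ⟨a', ha', a, ha, (neg_sub a a').symm⟩

theorem AddSubmonoid.zsmul_mem_of_nonneg {P : AddSubmonoid G} {a : G} (ha : a ∈ P) {n : ℤ}
    (hn : 0 ≤ n) : n • a ∈ P := by
  lift n to ℕ using hn
  simpa using P.nsmul_mem ha n

theorem Module.Basis.exists_add_nsmul_mem [Nontrivial G] {ι : Type*} [Fintype ι]
    (bas : Basis ι ℤ G) (hS : ∀ x ∈ S, ∀ y ∈ S, x + y ∈ S)
    (hS_top : AddSubgroup.closure S = ⊤) :
    ∃ b ∈ S, ∀ z : G, ∀ k : ℕ, 0 < k → (∀ i, |bas.repr z i| ≤ k) → z + k • b ∈ S := by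
  obtain ⟨s, hs⟩ : S.Nonempty := by
    rw [nonempty_iff_ne_empty]
    rintro rfl
    exact bot_ne_top (AddSubgroup.closure_empty (G := G) ▸ hS_top)
  choose a ha a' ha' hsub using fun i => exists_sub_eq_of_closure_eq_top hS_top (bas i)
  refine ⟨s + ∑ i, (a i + a' i),
    add_mem_of_mem_of_mem_closure hS hs (sum_mem fun i _ => add_mem (ha i) (ha' i)), ?_⟩
  rintro z k hk hz
  obtain ⟨n, rfl⟩ := Nat.exists_eq_succ_of_ne_zero hk.ne'
  set r := bas.repr z
  -- with `z = ∑ r i • (a i - a' i)`, every coefficient below is nonnegative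
  have key : z + (n + 1) • (s + ∑ i, (a i + a' i)) =
      s + (n • s + ∑ i, ((n + 1 + r i) • a i + (n + 1 - r i) • a' i)) := by
    conv_lhs => rw [← bas.sum_repr z]
    simp only [← hsub, smul_sub, add_smul, sub_smul, smul_add, Finset.smul_sum,
      Finset.sum_add_distrib, Finset.sum_sub_distrib, natCast_zsmul, one_smul]
    abel
  rw [key]
  refine add_mem_of_mem_of_mem_closure hS hs
    (add_mem (nsmul_mem (AddSubmonoid.subset_closure hs) n) (sum_mem fun i _ => add_mem
      (AddSubmonoid.zsmul_mem_of_nonneg (ha i) ?_) (AddSubmonoid.zsmul_mem_of_nonneg (ha' i) ?_)))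
  all_goals have := abs_le.1 (hz i); push_cast at this; linarith

end Semigroup

section Rounding

variable {L E : Type*} [AddCommGroup L] [NormedAddCommGroup E] [NormedSpace ℝ E] (ι : L →+ E)

theorem exists_norm_sub_sum_nsmul_le {F : Finset L} {z : L}
    (hz : ι z ∈ PointedCone.hull ℝ (ι '' (F : Set L))) :
    ∃ c : L → ℕ, ‖ι (z - ∑ g ∈ F, c g • g)‖ ≤ ∑ g ∈ F, ‖ι g‖ := by
  obtain ⟨r, hr⟩ := (Submodule.mem_span_image_finset_iff_exists_fun' ℝ≥0).1 hz
  refine ⟨fun g => ⌊(r g : ℝ)⌋₊, ?_⟩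
  have hfrac : ι (z - ∑ g ∈ F, ⌊(r g : ℝ)⌋₊ • g) =
      ∑ g ∈ F, ((r g : ℝ) - ⌊(r g : ℝ)⌋₊) • ι g := by
    simp only [map_sub, map_sum, map_nsmul, ← hr, sub_smul, Finset.sum_sub_distrib,
      Nat.cast_smul_eq_nsmul]
    rfl
  rw [hfrac]
  refine (norm_sum_le _ _).trans (Finset.sum_le_sum fun g _ => ?_)
  rw [norm_smul, Real.norm_eq_abs]
  refine mul_le_of_le_one_left (norm_nonneg _) (abs_le.2 ⟨?_, ?_⟩)
  · linarith [Nat.floor_le (r g).coe_nonneg]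
  · linarith [Nat.lt_floor_add_one (r g : ℝ)]

variable {S : Set L}

theorem mem_of_sub_nsmul_mem_hull (hS : ∀ x ∈ S, ∀ y ∈ S, x + y ∈ S) {F : Finset L}
    (hFS : (F : Set L) ⊆ S) {b : L} (hb : ∀ w : L, ∀ k : ℕ, ‖ι w‖ < k → w + k • b ∈ S)
    {k : ℕ} (hk : ∑ g ∈ F, ‖ι g‖ < k) {z : L}
    (hz : ι (z - k • b) ∈ PointedCone.hull ℝ (ι '' (F : Set L))) : z ∈ S := by
  obtain ⟨c, hc⟩ := exists_norm_sub_sum_nsmul_le ι hz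
  have hsum : ∑ g ∈ F, c g • g ∈ AddSubmonoid.closure S :=
    sum_mem fun g hg => nsmul_mem (AddSubmonoid.subset_closure (hFS hg)) _
  have hrest := hb _ k (hc.trans_lt hk)
  convert add_mem_of_mem_of_mem_closure hS hrest hsum using 1
  abel

end Rounding

section Lattice

variable {d : ℕ}

def latticeToReal (d : ℕ) : ℤ × (Fin d → ℤ) →+ ℝ × (Fin d → ℝ) :=
  (Int.castAddHom ℝ).prodMap ((Int.castAddHom ℝ).compLeft (Fin d))

@[simp]
theorem latticeToReal_apply (z : ℤ × (Fin d → ℤ)) :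
    latticeToReal d z = ((z.1 : ℝ), fun i => (z.2 i : ℝ)) := rfl

theorem IsGradedSubsemigroup.image_nptToInt {Γ : Set (NPt d)} (hΓ : IsGradedSubsemigroup Γ) :
    ∀ x ∈ nptToInt '' Γ, ∀ y ∈ nptToInt '' Γ, x + y ∈ nptToInt '' Γ := by
  rintro _ ⟨p, hp, rfl⟩ _ ⟨q, hq, rfl⟩
  exact ⟨p + q, hΓ p hp q hq, by ext <;> simp [nptToInt]⟩

theorem latticeToReal_nptToInt (p : NPt d) : latticeToReal d (nptToInt p) = nptToReal p := by
  simp [nptToInt, nptToReal]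

noncomputable def latticeBasis (d : ℕ) : Module.Basis (Unit ⊕ Fin d) ℤ (ℤ × (Fin d → ℤ)) :=
  (Module.Basis.singleton Unit ℤ).prod (Pi.basisFun ℤ (Fin d))

theorem abs_latticeBasis_repr_le (z : ℤ × (Fin d → ℤ)) (j : Unit ⊕ Fin d) :
    (|(latticeBasis d).repr z j| : ℝ) ≤ ‖latticeToReal d z‖ := by
  rcases j with _ | i
  · simp [latticeBasis]
  · simpa [latticeBasis] using
      (norm_le_pi_norm (latticeToReal d z).2 i).trans (norm_snd_le (latticeToReal d z))

theorem exists_add_nsmul_mem_of_norm_lt {S : Set (ℤ × (Fin d → ℤ))}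
    (hS : ∀ x ∈ S, ∀ y ∈ S, x + y ∈ S) (hS_top : AddSubgroup.closure S = ⊤) :
    ∃ b ∈ S, ∀ w, ∀ k : ℕ, ‖latticeToReal d w‖ < k → w + k • b ∈ S := by
  obtain ⟨b, hb, hbS⟩ := (latticeBasis d).exists_add_nsmul_mem hS hS_top
  refine ⟨b, hb, fun w k hw => hbS w k ?_ fun j => ?_⟩
  · exact_mod_cast (norm_nonneg _).trans_lt hw
  · exact_mod_cast (abs_latticeBasis_repr_le w j).trans hw.le

end Lattice

section Okounkov

variable {d : ℕ}

theorem one_prod_mem_interior_hull_of_mem_interior_okounkovBody {Γ : Set (NPt d)}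
    {x : Fin d → ℝ} (hx : x ∈ interior (okounkovBody Γ)) :
    ((1 : ℝ), x) ∈
      interior (PointedCone.hull ℝ (nptToReal '' Γ) : Set (ℝ × (Fin d → ℝ))) := by
  rw [← (PointedCone.convex _).interior_closure_eq_interior]
  refine mem_interior_of_mem_interior_slice (fun t ht p hp => ?_)
    (by simpa [okounkovBody, coneGen_eq_hull] using hx)
  exact map_mem_closure (continuous_const_smul t) hp fun q hq =>
    Submodule.smul_mem _ (⟨t, ht.le⟩ : ℝ≥0) hq

theorem latticeToReal_sub_nsmul_mem {C : PointedCone ℝ (ℝ × (Fin d → ℝ))}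
    {K : Set (Fin d → ℝ)} {δ : ℝ} (hKC : thickening δ ((fun x => ((1 : ℝ), x)) '' K) ⊆ C) {m : ℕ}
    {β : Fin d → ℤ} (hβ : (fun i => (β i : ℝ) / m) ∈ K) {b : ℤ × (Fin d → ℤ)} {k : ℕ}
    (hm : k * ‖latticeToReal d b‖ < δ * m) :
    latticeToReal d (((m : ℤ), β) - k • b) ∈ C := by
  have hm0 : (m : ℝ) ≠ 0 := by
    rintro h
    rw [h, mul_zero] at hm
    exact hm.not_ge (by positivity)
  set x : Fin d → ℝ := fun i => (β i : ℝ) / m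
  have hrescale : latticeToReal d (((m : ℤ), β) - k • b) =
      (m : ℝ) • (((1 : ℝ), x) - ((k : ℝ) / m) • latticeToReal d b) := by
    rw [map_sub, map_nsmul, ← Nat.cast_smul_eq_nsmul ℝ, smul_sub, smul_smul,
      mul_div_cancel₀ _ hm0]
    congr 1
    ext i <;> simp [x, mul_div_cancel₀ _ hm0]
  rw [hrescale]
  refine C.smul_mem m.cast_nonneg
    (hKC (mem_thickening_iff.2 ⟨_, mem_image_of_mem _ hβ, ?_⟩))
  rw [dist_eq_norm, sub_sub_cancel_left, norm_neg, norm_smul, Real.norm_eq_abs,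
    abs_of_nonneg (by positivity), div_mul_eq_mul_div, div_lt_iff₀ (by positivity)]
  exact hm

end Okounkov

theorem compact_inter_rescaled_gradedPiece_general
    (d : ℕ) (Γ : Set (NPt d)) (hΓ : IsAdmissible Γ)
    (K : Set (Fin d → ℝ)) (hKc : IsCompact K)
    (hKsub : K ⊆ interior (okounkovBody Γ)) :
    ∃ M : ℕ, ∀ m : ℕ, M ≤ m →
      K ∩ {x | ∃ α : Fin d → ℕ, (m, α) ∈ Γ ∧ x = fun i => (α i : ℝ) / m}
        = K ∩ {x | ∃ β : Fin d → ℤ, x = fun i => (β i : ℝ) / m} := by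
  obtain ⟨hΓadd, -, hΓgen⟩ := hΓ
  set S := nptToInt '' Γ
  have hKS : (fun x => ((1 : ℝ), x)) '' K ⊆
      interior (PointedCone.hull ℝ (latticeToReal d '' S)) := by
    rintro _ ⟨x, hx, rfl⟩
    rw [image_image, funext latticeToReal_nptToInt]
    exact one_prod_mem_interior_hull_of_mem_interior_okounkovBody (hKsub hx)
  obtain ⟨F, hFS, δ, hδ, hthick⟩ :=
    (hKc.image (by fun_prop)).exists_finset_thickening_subset_hull_image hKS
  obtain ⟨b, -, hb⟩ := exists_add_nsmul_mem_of_norm_lt hΓadd.image_nptToInt hΓgen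
  obtain ⟨k, hk⟩ := exists_nat_gt (∑ g ∈ F, ‖latticeToReal d g‖)
  obtain ⟨M, hM⟩ := exists_nat_gt (k * ‖latticeToReal d b‖ / δ)
  refine ⟨M, fun m hMm => Subset.antisymm ?_ ?_⟩
  · rintro x ⟨hxK, α, -, rfl⟩
    exact ⟨hxK, fun i => α i, by simp⟩
  · rintro x ⟨hxK, β, rfl⟩
    have hm : k * ‖latticeToReal d b‖ < δ * m := by
      rw [div_lt_iff₀' hδ] at hM
      exact hM.trans_le (by gcongr)
    obtain ⟨⟨n, α⟩, hΓnα, hnα⟩ := mem_of_sub_nsmul_mem_hull _ hΓadd.image_nptToInt hFS hb hk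
      (latticeToReal_sub_nsmul_mem hthick hxK hm)
    simp only [nptToInt, Prod.mk.injEq, Nat.cast_inj, funext_iff] at hnα
    obtain ⟨rfl, hαβ⟩ := hnα
    exact ⟨hxK, α, hΓnα, funext fun i => by simp [← hαβ i]⟩

/-- For a compact convex subset `K` of the interior of the Okounkov body of an admissible
graded subsemigroup `Γ`, for all large `m` the rescaled graded piece `Γ_m / m` meets `K`
exactly in the rational lattice points `ℤ^d / m` lying in `K`. -/
theorem compact_inter_rescaled_gradedPiece
    (d : ℕ) (hd : 1 ≤ d) (Γ : Set (NPt d)) (hΓ : IsAdmissible Γ)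
    (K : Set (Fin d → ℝ)) (hKc : IsCompact K) (hKconv : Convex ℝ K)
    (hKsub : K ⊆ interior (okounkovBody Γ)) :
    ∃ M : ℕ, ∀ m : ℕ, M ≤ m →
      K ∩ {x | ∃ α : Fin d → ℕ, (m, α) ∈ Γ ∧ x = fun i => (α i : ℝ) / m}
        = K ∩ {x | ∃ β : Fin d → ℤ, x = fun i => (β i : ℝ) / m} :=
  compact_inter_rescaled_gradedPiece_general d Γ hΓ K hKc hKsub
end

section
/- Let K be a non-Archimedean field, V a K-vector space of finite dimension d, and fix a non-Archimedean norm N on V. Then for any two non-Archimedean norms N', N'' on V, |vol(N',N) − vol(N'',N)| ≤ d_∞(N',N''), and likewise |vol(N,N') − vol(N,N'')| ≤ d_∞(N',N''); that is, the relative volume is 1-Lipschitz in each variable with respect to the d_∞ distance. -/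
open scoped BigOperators

/-- A non-Archimedean norm on a `K`-vector space `V`. -/
def IsNAnorm (K : Type*) {V : Type*} [NormedField K] [AddCommGroup V] [Module K V]
    (N : V → ℝ) : Prop :=
  (∀ v, 0 ≤ N v) ∧ (∀ v, N v = 0 ↔ v = 0) ∧
  (∀ (a : K) (v : V), N (a • v) = ‖a‖ * N v) ∧
  (∀ v w : V, N (v + w) ≤ max (N v) (N w))

/-- The sup-distance `d_∞` between two norms on `V`. -/
noncomputable def dInfty {V : Type*} [AddCommGroup V] (N N' : V → ℝ) : ℝ :=
  sSup {r | ∃ v : V, v ≠ 0 ∧ r = |Real.log (N' v) - Real.log (N v)|}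

/-- The `i`-th relative spectral value `λᵢ(N, N')`:
the supremum, over subspaces `W ⊆ V` with `dim W ≥ i`, of
`inf_{w ∈ W ∖ {0}} (log N'(w) − log N(w))`. -/
noncomputable def specVal (K : Type*) {V : Type*} [Field K] [AddCommGroup V] [Module K V]
    (N N' : V → ℝ) (i : ℕ) : ℝ :=
  sSup {r | ∃ W : Submodule K V, i ≤ Module.finrank K W ∧
    r = sInf {s | ∃ w ∈ W, w ≠ (0 : V) ∧ s = Real.log (N' w) - Real.log (N w)}}

/-- The relative volume `vol(N, N') = (1/d)·Σ_{i=1}^d λᵢ(N, N')`, where `d = dim V`. -/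
noncomputable def relVol (K : Type*) (V : Type*) [Field K] [AddCommGroup V] [Module K V]
    (N N' : V → ℝ) : ℝ :=
  (Module.finrank K V : ℝ)⁻¹ *
    ∑ i ∈ Finset.range (Module.finrank K V), specVal K N N' (i + 1)

section Aux

variable {K V : Type*} [NormedField K] [AddCommGroup V] [Module K V]

lemma IsNAnorm.pos {N : V → ℝ} (h : IsNAnorm K N) {v : V} (hv : v ≠ 0) : 0 < N v :=
  lt_of_le_of_ne (h.1 v) (fun e => hv ((h.2.1 v).mp e.symm))

lemma IsNAnorm.neg {N : V → ℝ} (h : IsNAnorm K N) (v : V) : N (-v) = N v := by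
  have := h.2.2.1 (-1 : K) v
  simpa using this

lemma IsNAnorm.max_eq_of_lt {N : V → ℝ} (h : IsNAnorm K N) {x y : V} (hxy : N y < N x) :
    N (x + y) = N x := by
  refine le_antisymm ((h.2.2.2 x y).trans (by simp [hxy.le])) ?_
  by_contra hc
  push_neg at hc
  have h2 : N x ≤ max (N (x + y)) (N y) := by
    have := h.2.2.2 (x + y) (-y)
    simpa [h.neg, add_neg_cancel_right] using this
  rcases max_cases (N (x + y)) (N y) with ⟨he, _⟩ | ⟨he, _⟩ <;> rw [he] at h2 <;> linarith

lemma IsNAnorm.max_eq {N : V → ℝ} (h : IsNAnorm K N) {x y : V} (hxy : N x ≠ N y) :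
    N (x + y) = max (N x) (N y) := by
  rcases hxy.lt_or_gt with h1 | h1
  · rw [add_comm, h.max_eq_of_lt h1, max_eq_right h1.le]
  · rw [h.max_eq_of_lt h1, max_eq_left h1.le]

lemma IsNAnorm.sum_norm_mem {N : V → ℝ} (h : IsNAnorm K N) {ι : Type*} (s : Finset ι)
    (hs : s.Nonempty) (w : ι → V)
    (hdist : ∀ i ∈ s, ∀ j ∈ s, i ≠ j → N (w i) ≠ N (w j)) :
    ∃ i ∈ s, N (∑ j ∈ s, w j) = N (w i) := by
  induction s using Finset.cons_induction with
  | empty => exact absurd hs (by simp)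
  | cons a s ha ih =>
    rcases s.eq_empty_or_nonempty with rfl | hsne
    · exact ⟨a, by simp⟩
    · obtain ⟨i, hi, hNi⟩ := ih hsne
        (fun i hi j hj hij => hdist i (Finset.mem_cons_of_mem hi) j (Finset.mem_cons_of_mem hj) hij)
      have hne : N (w a) ≠ N (∑ j ∈ s, w j) := by
        rw [hNi]
        exact hdist a (Finset.mem_cons_self a s) i (Finset.mem_cons_of_mem hi)
          (fun e => ha (e ▸ hi))
      rw [Finset.sum_cons, h.max_eq hne, hNi]
      rcases max_cases (N (w a)) (N (w i)) with ⟨he, _⟩ | ⟨he, _⟩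
      · exact ⟨a, Finset.mem_cons_self a s, he⟩
      · exact ⟨i, Finset.mem_cons_of_mem hi, he⟩

/-- Over a trivially-valued field, a non-Archimedean norm on a finite-dimensional space
is bounded above and below on nonzero vectors. -/
lemma trivial_bounded [FiniteDimensional K V] (htriv : ∀ x : K, x ≠ 0 → ‖x‖ = 1)
    {N : V → ℝ} (h : IsNAnorm K N) :
    ∃ a b : ℝ, 0 < a ∧ ∀ v : V, v ≠ 0 → a ≤ N v ∧ N v ≤ b := by
  set S : Set ℝ := N '' {v : V | v ≠ 0} with hS
  have hfin : S.Finite := by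
    by_contra hinf
    set d := Module.finrank K V with hd
    let f : ℕ ↪ S := Set.Infinite.natEmbedding S hinf
    have hchoice : ∀ n : Fin (d + 1), ∃ v : V, v ≠ 0 ∧ N v = (f n : ℝ) := by
      intro n
      obtain ⟨v, hv, hNv⟩ := (f n).2
      exact ⟨v, hv, hNv⟩
    choose v hv hNv using hchoice
    have hNinj : ∀ m n : Fin (d + 1), m ≠ n → N (v m) ≠ N (v n) := by
      intro m n hmn he
      rw [hNv, hNv] at he
      exact hmn (Fin.val_injective (f.injective (Subtype.ext he)))
    have hli : LinearIndependent K v := by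
      rw [Fintype.linearIndependent_iff]
      classical
      intro g hg
      by_contra hne
      push_neg at hne
      obtain ⟨i₀, hi₀⟩ := hne
      set s : Finset (Fin (d + 1)) := Finset.univ.filter (fun i => g i ≠ 0) with hsdef
      have hsne : s.Nonempty := ⟨i₀, by simp [hsdef, hi₀]⟩
      have hsum : ∑ j ∈ s, g j • v j = 0 := by
        rw [← hg]
        exact Finset.sum_filter_of_ne (fun i _ hne' => fun hgz => hne' (by rw [hgz, zero_smul]))
      have hvals : ∀ i ∈ s, N (g i • v i) = N (v i) := by
        intro i hi
        rw [h.2.2.1, htriv (g i) (by simpa [hsdef] using hi), one_mul]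
      obtain ⟨i, hi, hNi⟩ := h.sum_norm_mem s hsne (fun j => g j • v j)
        (fun i hi j hj hij => by
          rw [hvals i hi, hvals j hj]; exact hNinj i j hij)
      rw [hsum, hvals i hi] at hNi
      have := h.pos (hv i)
      rw [← hNi, (h.2.1 0).mpr rfl] at this
      exact lt_irrefl 0 this
    have := hli.fintype_card_le_finrank
    simp [hd] at this
  rcases Set.eq_empty_or_nonempty S with he | hne
  · refine ⟨1, 1, one_pos, fun v hv => absurd ?_ (Set.not_nonempty_iff_eq_empty.mpr he)⟩
    exact ⟨N v, ⟨v, hv, rfl⟩⟩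
  · have hne' : hfin.toFinset.Nonempty := by
      rwa [Set.Finite.toFinset_nonempty]
    refine ⟨hfin.toFinset.min' hne', hfin.toFinset.max' hne', ?_, fun v hv => ?_⟩
    · obtain ⟨w, hw, hNw⟩ : hfin.toFinset.min' hne' ∈ S := by
        rw [← Set.Finite.mem_toFinset hfin]
        exact hfin.toFinset.min'_mem hne'
      rw [← hNw]
      exact h.pos hw
    · have hmem : N v ∈ hfin.toFinset := by
        rw [Set.Finite.mem_toFinset]
        exact ⟨v, hv, rfl⟩
      exact ⟨hfin.toFinset.min'_le _ hmem, hfin.toFinset.le_max' _ hmem⟩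

/-- Over a nontrivially-valued complete field, a non-Archimedean norm on a
finite-dimensional space is equivalent to the sup norm of the coordinates. -/
lemma nontrivial_bounded [CompleteSpace K] [FiniteDimensional K V]
    (hx : ∃ x : K, 1 < ‖x‖) {N : V → ℝ} (h : IsNAnorm K N) :
    ∃ a b : ℝ, 0 < a ∧ ∀ v : V,
      a * ‖(Module.finBasis K V).equivFun v‖ ≤ N v ∧
      N v ≤ b * ‖(Module.finBasis K V).equivFun v‖ := by
  letI : NontriviallyNormedField K := ⟨hx⟩
  letI : NormedAddCommGroup V := AddGroupNorm.toNormedAddCommGroup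
    { toFun := N
      map_zero' := (h.2.1 0).mpr rfl
      add_le' := fun x y => (h.2.2.2 x y).trans
        (max_le (le_add_of_nonneg_right (h.1 y)) (le_add_of_nonneg_left (h.1 x)))
      neg' := h.neg
      eq_zero_of_map_eq_zero' := fun x hx => (h.2.1 x).mp hx }
  have hnorm : ∀ v : V, ‖v‖ = N v := fun v => rfl
  letI : NormedSpace K V := ⟨fun a v => le_of_eq (h.2.2.1 a v)⟩
  set e := (Module.finBasis K V).equivFun with he
  have c1 : Continuous e.toLinearMap := e.toLinearMap.continuous_of_finiteDimensional
  have c2 : Continuous e.symm.toLinearMap := e.symm.toLinearMap.continuous_of_finiteDimensional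
  obtain ⟨C1, hC1, hC1le⟩ := (⟨e.toLinearMap, c1⟩ :
    V →L[K] (Fin (Module.finrank K V) → K)).bound
  obtain ⟨C2, hC2, hC2le⟩ := (⟨e.symm.toLinearMap, c2⟩ :
    (Fin (Module.finrank K V) → K) →L[K] V).bound
  refine ⟨C1⁻¹, C2, inv_pos.mpr hC1, fun v => ⟨?_, ?_⟩⟩
  · have := hC1le v
    rw [hnorm] at this
    have h2 : C1⁻¹ * ‖e v‖ ≤ C1⁻¹ * (C1 * N v) := by
      apply mul_le_mul_of_nonneg_left _ (inv_nonneg.mpr hC1.le)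
      exact this
    calc C1⁻¹ * ‖e v‖ ≤ C1⁻¹ * (C1 * N v) := h2
      _ = N v := by field_simp
  · have := hC2le (e v)
    rw [hnorm] at this
    simpa using this

lemma log_abs_bound {x a b : ℝ} (ha : 0 < a) (h1 : a ≤ x) (h2 : x ≤ b) :
    |Real.log x| ≤ |Real.log a| + |Real.log b| := by
  have hx : 0 < x := lt_of_lt_of_le ha h1
  have l1 : Real.log a ≤ Real.log x := (Real.log_le_log_iff ha hx).mpr h1
  have l2 : Real.log x ≤ Real.log b := (Real.log_le_log_iff hx (lt_of_lt_of_le hx h2)).mpr h2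
  rw [abs_le]
  constructor
  · have := neg_abs_le (Real.log a)
    have h0 : (0:ℝ) ≤ |Real.log b| := abs_nonneg _
    linarith
  · have := le_abs_self (Real.log b)
    have h0 : (0:ℝ) ≤ |Real.log a| := abs_nonneg _
    linarith

/-- All non-Archimedean norms on a finite-dimensional space over a complete
(possibly trivially-valued) field have uniformly bounded log-ratios. -/
lemma na_log_bdd [CompleteSpace K] [FiniteDimensional K V] {N₁ N₂ : V → ℝ}
    (h₁ : IsNAnorm K N₁) (h₂ : IsNAnorm K N₂) :
    ∃ C : ℝ, ∀ v : V, v ≠ 0 → |Real.log (N₁ v) - Real.log (N₂ v)| ≤ C := by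
  have key : ∃ φ : V → ℝ, (∀ v : V, v ≠ 0 → 0 < φ v) ∧
      ∀ N : V → ℝ, IsNAnorm K N → ∃ a b : ℝ, 0 < a ∧
        ∀ v : V, v ≠ 0 → a * φ v ≤ N v ∧ N v ≤ b * φ v := by
    by_cases hx : ∃ x : K, 1 < ‖x‖
    · refine ⟨fun v => ‖(Module.finBasis K V).equivFun v‖, fun v hv => ?_, fun N hN => ?_⟩
      · have : (Module.finBasis K V).equivFun v ≠ 0 := fun hz => hv ((LinearEquiv.map_eq_zero_iff _).mp hz)
        exact norm_pos_iff.mpr this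
      · obtain ⟨a, b, ha, hab⟩ := nontrivial_bounded hx hN
        exact ⟨a, b, ha, fun v _ => hab v⟩
    · push_neg at hx
      have htriv : ∀ x : K, x ≠ 0 → ‖x‖ = 1 := by
        intro x hx0
        have h1 : ‖x‖ ≤ 1 := hx x
        have h2 : ‖x⁻¹‖ ≤ 1 := hx x⁻¹
        rw [norm_inv] at h2
        have hpos : 0 < ‖x‖ := norm_pos_iff.mpr hx0
        have : 1 ≤ ‖x‖ := by
          rw [inv_le_one_iff₀] at h2
          rcases h2 with h | h
          · linarith
          · exact h
        linarith
      refine ⟨fun _ => 1, fun _ _ => one_pos, fun N hN => ?_⟩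
      obtain ⟨a, b, ha, hab⟩ := trivial_bounded htriv hN
      exact ⟨a, b, ha, fun v hv => by simpa using hab v hv⟩
  obtain ⟨φ, hφ, hbd⟩ := key
  obtain ⟨a₁, b₁, ha₁, hab₁⟩ := hbd N₁ h₁
  obtain ⟨a₂, b₂, ha₂, hab₂⟩ := hbd N₂ h₂
  refine ⟨(|Real.log a₁| + |Real.log b₁|) + (|Real.log a₂| + |Real.log b₂|), fun v hv => ?_⟩
  have hφv : 0 < φ v := hφ v hv
  have key1 : ∀ (NN : V → ℝ) (a b : ℝ), 0 < NN v → 0 < a → a * φ v ≤ NN v → NN v ≤ b * φ v →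
      |Real.log (NN v) - Real.log (φ v)| ≤ |Real.log a| + |Real.log b| := by
    intro NN a b hNpos ha hl hr
    have : |Real.log (NN v / φ v)| ≤ |Real.log a| + |Real.log b| := by
      apply log_abs_bound ha
      · rw [le_div_iff₀ hφv]; linarith [hl]
      · rw [div_le_iff₀ hφv]; linarith [hr]
    rwa [Real.log_div (ne_of_gt hNpos) (ne_of_gt hφv)] at this
  obtain ⟨hl₁, hr₁⟩ := hab₁ v hv
  obtain ⟨hl₂, hr₂⟩ := hab₂ v hv
  have k1 := key1 N₁ a₁ b₁ (h₁.pos hv) ha₁ hl₁ hr₁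
  have k2 := key1 N₂ a₂ b₂ (h₂.pos hv) ha₂ hl₂ hr₂
  calc |Real.log (N₁ v) - Real.log (N₂ v)|
      ≤ |Real.log (N₁ v) - Real.log (φ v)| + |Real.log (φ v) - Real.log (N₂ v)| :=
        abs_sub_le _ _ _
    _ ≤ (|Real.log a₁| + |Real.log b₁|) + (|Real.log a₂| + |Real.log b₂|) := by
        rw [abs_sub_comm (Real.log (φ v))]
        exact add_le_add k1 k2
  
end Aux

section Spec

variable {K V : Type*} [NormedField K] [AddCommGroup V] [Module K V]

lemma spec_le {F G : V → ℝ} [FiniteDimensional K V]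
    (hF : ∃ C, ∀ v : V, v ≠ 0 → |F v| ≤ C) (hG : ∃ C, ∀ v : V, v ≠ 0 → |G v| ≤ C)
    {D : ℝ} (hD : ∀ v : V, v ≠ 0 → |F v - G v| ≤ D)
    {i : ℕ} (hi : 1 ≤ i) (hid : i ≤ Module.finrank K V) :
    sSup {r | ∃ W : Submodule K V, i ≤ Module.finrank K W ∧
        r = sInf {s | ∃ w ∈ W, w ≠ (0 : V) ∧ s = F w}}
      ≤ sSup {r | ∃ W : Submodule K V, i ≤ Module.finrank K W ∧
        r = sInf {s | ∃ w ∈ W, w ≠ (0 : V) ∧ s = G w}} + D := by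
  obtain ⟨CF, hCF⟩ := hF
  obtain ⟨CG, hCG⟩ := hG
  set TF : Submodule K V → Set ℝ := fun W => {s | ∃ w ∈ W, w ≠ (0 : V) ∧ s = F w} with hTF
  set TG : Submodule K V → Set ℝ := fun W => {s | ∃ w ∈ W, w ≠ (0 : V) ∧ s = G w} with hTG
  have hex : ∀ W : Submodule K V, i ≤ Module.finrank K W → ∃ w ∈ W, w ≠ (0 : V) := by
    intro W hW
    have hWne : W ≠ ⊥ := by
      rintro rfl
      rw [finrank_bot] at hW
      omega
    exact (Submodule.ne_bot_iff W).mp hWne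
  have hTFne : ∀ W : Submodule K V, i ≤ Module.finrank K W → (TF W).Nonempty := by
    intro W hW
    obtain ⟨w, hwW, hw0⟩ := hex W hW
    exact ⟨F w, w, hwW, hw0, rfl⟩
  have hTGne : ∀ W : Submodule K V, i ≤ Module.finrank K W → (TG W).Nonempty := by
    intro W hW
    obtain ⟨w, hwW, hw0⟩ := hex W hW
    exact ⟨G w, w, hwW, hw0, rfl⟩
  have hTFbdd : ∀ W : Submodule K V, BddBelow (TF W) := by
    intro W
    refine ⟨-CF, ?_⟩
    rintro s ⟨w, _, hw0, rfl⟩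
    linarith [neg_abs_le (F w), hCF w hw0]
  have hTGbdd : ∀ W : Submodule K V, BddBelow (TG W) := by
    intro W
    refine ⟨-CG, ?_⟩
    rintro s ⟨w, _, hw0, rfl⟩
    linarith [neg_abs_le (G w), hCG w hw0]
  have hWinf : ∀ W : Submodule K V, i ≤ Module.finrank K W →
      sInf (TF W) ≤ sInf (TG W) + D := by
    intro W hW
    have h1 : sInf (TF W) - D ≤ sInf (TG W) := by
      apply le_csInf (hTGne W hW)
      rintro s ⟨w, hwW, hw0, rfl⟩
      have h2 : sInf (TF W) ≤ F w := csInf_le (hTFbdd W) ⟨w, hwW, hw0, rfl⟩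
      have h3 := hD w hw0
      rw [abs_le] at h3
      linarith
    linarith
  have hAGbdd : BddAbove {r | ∃ W : Submodule K V, i ≤ Module.finrank K W ∧ r = sInf (TG W)} := by
    refine ⟨CG, ?_⟩
    rintro r ⟨W, hW, rfl⟩
    obtain ⟨w, hwW, hw0⟩ := hex W hW
    have h2 : sInf (TG W) ≤ G w := csInf_le (hTGbdd W) ⟨w, hwW, hw0, rfl⟩
    linarith [le_abs_self (G w), hCG w hw0]
  have hAFne : {r | ∃ W : Submodule K V, i ≤ Module.finrank K W ∧ r = sInf (TF W)}.Nonempty := by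
    refine ⟨sInf (TF ⊤), ⊤, ?_, rfl⟩
    rwa [finrank_top]
  apply csSup_le hAFne
  rintro r ⟨W, hW, rfl⟩
  have h1 : sInf (TG W) ≤ sSup {r | ∃ W : Submodule K V,
      i ≤ Module.finrank K W ∧ r = sInf (TG W)} := le_csSup hAGbdd ⟨W, hW, rfl⟩
  have h2 := hWinf W hW
  linarith

lemma specVal_diff_le [FiniteDimensional K V] {N₁ N₂ M₁ M₂ : V → ℝ} {D : ℝ}
    (h1 : ∃ C, ∀ v : V, v ≠ 0 → |Real.log (N₂ v) - Real.log (N₁ v)| ≤ C)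
    (h2 : ∃ C, ∀ v : V, v ≠ 0 → |Real.log (M₂ v) - Real.log (M₁ v)| ≤ C)
    (hD : ∀ v : V, v ≠ 0 →
      |(Real.log (N₂ v) - Real.log (N₁ v)) - (Real.log (M₂ v) - Real.log (M₁ v))| ≤ D)
    {i : ℕ} (hi : 1 ≤ i) (hid : i ≤ Module.finrank K V) :
    specVal K N₁ N₂ i ≤ specVal K M₁ M₂ i + D := by
  unfold specVal
  exact spec_le h1 h2 hD hi hid

end Spec

/-- The relative volume is 1-Lipschitz in each variable for the `d_∞` distance. -/
theorem relVol_lipschitz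
    (K V : Type*) [NormedField K] [IsUltrametricDist K] [CompleteSpace K]
    [AddCommGroup V] [Module K V] [FiniteDimensional K V]
    (N : V → ℝ) (hN : IsNAnorm K N) :
    ∀ N' N'' : V → ℝ, IsNAnorm K N' → IsNAnorm K N'' →
      |relVol K V N' N - relVol K V N'' N| ≤ dInfty N' N'' ∧
      |relVol K V N N' - relVol K V N N''| ≤ dInfty N' N'' := by
  intro N' N'' h' h''
  by_cases hd : Module.finrank K V = 0
  · have hsub : ∀ v : V, v = 0 := by
      rw [← finrank_zero_iff_forall_zero (K := K)]
      exact hd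
    have hempty : {r | ∃ v : V, v ≠ 0 ∧ r = |Real.log (N'' v) - Real.log (N' v)|} = ∅ := by
      ext r
      simp only [Set.mem_setOf_eq, Set.mem_empty_iff_false, iff_false, not_exists]
      intro v ⟨hv, _⟩
      exact hv (hsub v)
    have hD : dInfty N' N'' = 0 := by
      rw [dInfty, hempty, Real.sSup_empty]
    have hvol : ∀ A B : V → ℝ, relVol K V A B = 0 := by
      intro A B
      rw [relVol, hd]
      simp
    rw [hD, hvol, hvol, hvol, hvol]
    simp
  · -- main case
    obtain ⟨C0, hC0⟩ := na_log_bdd h'' h'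
    have hbddS : BddAbove {r | ∃ v : V, v ≠ 0 ∧ r = |Real.log (N'' v) - Real.log (N' v)|} := by
      refine ⟨C0, ?_⟩
      rintro r ⟨v, hv, rfl⟩
      exact hC0 v hv
    have key : ∀ v : V, v ≠ 0 → |Real.log (N' v) - Real.log (N'' v)| ≤ dInfty N' N'' := by
      intro v hv
      rw [abs_sub_comm]
      exact le_csSup hbddS ⟨v, hv, rfl⟩
    set D := dInfty N' N'' with hDdef
    -- bounds for each pair of norms
    have b1 : ∃ C, ∀ v : V, v ≠ 0 → |Real.log (N v) - Real.log (N' v)| ≤ C := na_log_bdd hN h'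
    have b2 : ∃ C, ∀ v : V, v ≠ 0 → |Real.log (N v) - Real.log (N'' v)| ≤ C := na_log_bdd hN h''
    have b3 : ∃ C, ∀ v : V, v ≠ 0 → |Real.log (N' v) - Real.log (N v)| ≤ C := na_log_bdd h' hN
    have b4 : ∃ C, ∀ v : V, v ≠ 0 → |Real.log (N'' v) - Real.log (N v)| ≤ C := na_log_bdd h'' hN
    have spec1 : ∀ i ∈ Finset.range (Module.finrank K V),
        |specVal K N' N (i + 1) - specVal K N'' N (i + 1)| ≤ D := by
      intro i hi
      rw [Finset.mem_range] at hi
      have hi1 : 1 ≤ i + 1 := le_refl 1 |>.trans (by omega)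
      have hi2 : i + 1 ≤ Module.finrank K V := by omega
      have le1 : specVal K N' N (i + 1) ≤ specVal K N'' N (i + 1) + D := by
        apply specVal_diff_le b1 b2 _ hi1 hi2
        intro v hv
        have : Real.log (N v) - Real.log (N' v) - (Real.log (N v) - Real.log (N'' v)) =
            Real.log (N'' v) - Real.log (N' v) := by ring
        rw [this, abs_sub_comm]
        exact key v hv
      have le2 : specVal K N'' N (i + 1) ≤ specVal K N' N (i + 1) + D := by
        apply specVal_diff_le b2 b1 _ hi1 hi2
        intro v hv
        have : Real.log (N v) - Real.log (N'' v) - (Real.log (N v) - Real.log (N' v)) =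
            Real.log (N' v) - Real.log (N'' v) := by ring
        rw [this]
        exact key v hv
      rw [abs_sub_le_iff]
      constructor <;> linarith
    have spec2 : ∀ i ∈ Finset.range (Module.finrank K V),
        |specVal K N N' (i + 1) - specVal K N N'' (i + 1)| ≤ D := by
      intro i hi
      rw [Finset.mem_range] at hi
      have hi1 : 1 ≤ i + 1 := by omega
      have hi2 : i + 1 ≤ Module.finrank K V := by omega
      have le1 : specVal K N N' (i + 1) ≤ specVal K N N'' (i + 1) + D := by
        apply specVal_diff_le b3 b4 _ hi1 hi2
        intro v hv
        have : Real.log (N' v) - Real.log (N v) - (Real.log (N'' v) - Real.log (N v)) =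
            Real.log (N' v) - Real.log (N'' v) := by ring
        rw [this]
        exact key v hv
      have le2 : specVal K N N'' (i + 1) ≤ specVal K N N' (i + 1) + D := by
        apply specVal_diff_le b4 b3 _ hi1 hi2
        intro v hv
        have : Real.log (N'' v) - Real.log (N v) - (Real.log (N' v) - Real.log (N v)) =
            Real.log (N'' v) - Real.log (N' v) := by ring
        rw [this, abs_sub_comm]
        exact key v hv
      rw [abs_sub_le_iff]
      constructor <;> linarith
    -- sum up
    have main : ∀ (f g : ℕ → ℝ),
        (∀ i ∈ Finset.range (Module.finrank K V), |f (i+1) - g (i+1)| ≤ D) →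
        |(Module.finrank K V : ℝ)⁻¹ * ∑ i ∈ Finset.range (Module.finrank K V), f (i+1) -
          (Module.finrank K V : ℝ)⁻¹ * ∑ i ∈ Finset.range (Module.finrank K V), g (i+1)| ≤ D := by
      intro f g hfg
      set d := Module.finrank K V with hddef
      have hd0 : (0:ℝ) < (d:ℝ) := by
        exact_mod_cast Nat.pos_of_ne_zero hd
      have h1 : (d:ℝ)⁻¹ * ∑ i ∈ Finset.range d, f (i+1) -
          (d:ℝ)⁻¹ * ∑ i ∈ Finset.range d, g (i+1) =
          (d:ℝ)⁻¹ * ∑ i ∈ Finset.range d, (f (i+1) - g (i+1)) := by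
        rw [Finset.sum_sub_distrib]
        ring
      rw [h1, abs_mul, abs_of_nonneg (by positivity : (0:ℝ) ≤ (d:ℝ)⁻¹)]
      have h2 : |∑ i ∈ Finset.range d, (f (i+1) - g (i+1))| ≤ (d:ℝ) * D := by
        calc |∑ i ∈ Finset.range d, (f (i+1) - g (i+1))|
            ≤ ∑ i ∈ Finset.range d, |f (i+1) - g (i+1)| := Finset.abs_sum_le_sum_abs _ _
          _ ≤ ∑ _i ∈ Finset.range d, D := Finset.sum_le_sum hfg
          _ = (d:ℝ) * D := by rw [Finset.sum_const, Finset.card_range, nsmul_eq_mul]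
      calc (d:ℝ)⁻¹ * |∑ i ∈ Finset.range d, (f (i+1) - g (i+1))|
          ≤ (d:ℝ)⁻¹ * ((d:ℝ) * D) := by
            apply mul_le_mul_of_nonneg_left h2 (by positivity)
        _ = D := by field_simp
    exact ⟨main (specVal K N' N) (specVal K N'' N) spec1,
      main (specVal K N N') (specVal K N N'') spec2⟩
end

section
/- Let K be a non-Archimedean field and V a finite-dimensional K-vector space. Then the set of diagonalizable norms is dense in the set of all non-Archimedean norms on V for the d_∞ distance: for every non-Archimedean norm N on V and every ε > 0 there exists a diagonalizable norm N_ε on V with d_∞(N, N_ε) ≤ ε. -/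
open scoped BigOperators

/-- A norm on a finite-dimensional `K`-vector space is diagonalizable if there is a basis
`(e₁, …, e_d)` with `N(Σᵢ aᵢeᵢ) = maxᵢ |aᵢ|·N(eᵢ)` for all scalars. -/
def IsDiagonalizableNorm (K : Type*) {V : Type*} [NormedField K] [AddCommGroup V]
    [Module K V] (N : V → ℝ) : Prop :=
  ∃ b : Module.Basis (Fin (Module.finrank K V)) K V,
    ∀ a : Fin (Module.finrank K V) → K, N (∑ i, a i • b i) = ⨆ i, ‖a i‖ * N (b i)

/-!
Over a complete field, a finite-dimensional subspace `W` stays at positive `N`-distance from any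
vector outside it: `W` is closed when the absolute value of `K` is nontrivial, and `N` is bounded
below on `V ∖ {0}` when it is trivial (then the sublevel sets of `N` are subspaces). Taking a
near-minimiser of the distance gives a non-Archimedean Riesz lemma, and adding such vectors one at
a time builds a basis `b` with `c · |aᵢ| N(bᵢ) ≤ N(∑ⱼ aⱼ bⱼ)` for any `c < 1`. The diagonal norm
`max |aᵢ| N(bᵢ)` then lies between `N` and `c⁻¹ N`, and `c = exp (-ε)` gives `d_∞ ≤ ε`.
-/

open Module

namespace IsNAnorm

variable {K V : Type*} [NormedField K] [AddCommGroup V] [Module K V] {N : V → ℝ}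

lemma nonneg (hN : IsNAnorm K N) (v : V) : 0 ≤ N v := hN.1 v

lemma map_zero (hN : IsNAnorm K N) : N 0 = 0 := (hN.2.1 0).2 rfl

lemma map_smul (hN : IsNAnorm K N) (a : K) (v : V) : N (a • v) = ‖a‖ * N v := hN.2.2.1 a v

lemma map_add_le_max (hN : IsNAnorm K N) (v w : V) : N (v + w) ≤ max (N v) (N w) :=
  hN.2.2.2 v w

lemma pos_s11 (hN : IsNAnorm K N) {v : V} (hv : v ≠ 0) : 0 < N v :=
  (hN.nonneg v).lt_of_ne' fun h => hv ((hN.2.1 v).1 h)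

lemma map_neg (hN : IsNAnorm K N) (v : V) : N (-v) = N v := by
  simpa using hN.map_smul (-1) v

lemma map_sub_le_max (hN : IsNAnorm K N) (v w : V) : N (v - w) ≤ max (N v) (N w) := by
  simpa [sub_eq_add_neg, hN.map_neg] using hN.map_add_le_max v (-w)

lemma map_sum_le (hN : IsNAnorm K N) {ι : Type*} (s : Finset ι) (g : ι → V) {B : ℝ}
    (hB : 0 ≤ B) (h : ∀ i ∈ s, N (g i) ≤ B) : N (∑ i ∈ s, g i) ≤ B := by
  induction s using Finset.cons_induction with
  | empty => simpa [hN.map_zero] using hB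
  | cons a s ha ih =>
    rw [Finset.sum_cons]
    exact (hN.map_add_le_max _ _).trans (max_le (h a (Finset.mem_cons_self a s))
      (ih fun i hi => h i (Finset.mem_cons_of_mem hi)))

def toAddGroupNorm (hN : IsNAnorm K N) : AddGroupNorm V where
  toFun := N
  map_zero' := hN.map_zero
  add_le' v w := (hN.map_add_le_max v w).trans
    (max_le (le_add_of_nonneg_right (hN.nonneg w)) (le_add_of_nonneg_left (hN.nonneg v)))
  neg' := hN.map_neg
  eq_zero_of_map_eq_zero' v := (hN.2.1 v).1

/-- As `K` is complete and nontrivially normed, finite-dimensional subspaces are `N`-closed. -/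
lemma exists_pos_le_map_sub_of_one_lt_norm [CompleteSpace K] (hN : IsNAnorm K N)
    {a : K} (ha : 1 < ‖a‖) {W : Submodule K V} [FiniteDimensional K W] {v : V} (hv : v ∉ W) :
    ∃ δ > 0, ∀ w ∈ W, δ ≤ N (v - w) := by
  let _ : NontriviallyNormedField K := ⟨⟨a, ha⟩⟩
  let _ : NormedAddCommGroup V := hN.toAddGroupNorm.toNormedAddCommGroup
  let _ : NormedSpace K V := ⟨fun a v => (hN.map_smul a v).le⟩
  have hclosed : IsClosed (W : Set V) := W.closed_of_finiteDimensional
  exact ⟨_, (hclosed.notMem_iff_infDist_pos ⟨0, W.zero_mem⟩).1 hv,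
    fun w hw => (Metric.infDist_le_dist_of_mem hw).trans_eq (dist_eq_norm v w)⟩

def sublevel (hN : IsNAnorm K N) (htriv : ∀ a : K, a ≠ 0 → ‖a‖ = 1) (x : V) :
    Submodule K V where
  carrier := {y | N y ≤ N x}
  add_mem' hy hz := (hN.map_add_le_max _ _).trans (max_le hy hz)
  zero_mem' := hN.map_zero.trans_le (hN.nonneg x)
  smul_mem' a y hy := by
    rcases eq_or_ne a 0 with rfl | ha
    · simpa [hN.map_zero] using hN.nonneg x
    · simpa [hN.map_smul, htriv a ha] using hy

lemma exists_pos_le_of_norm_eq_one [FiniteDimensional K V] (hN : IsNAnorm K N)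
    (htriv : ∀ a : K, a ≠ 0 → ‖a‖ = 1) : ∃ δ > 0, ∀ v ≠ 0, δ ≤ N v := by
  by_cases hV : ∃ x : V, x ≠ 0
  · obtain ⟨x₀, hx₀⟩ := hV
    -- a nonzero vector whose sublevel subspace has the least dimension has the least norm
    let dim : V → ℕ := fun x => finrank K (hN.sublevel htriv x)
    let x := Function.argminOn dim {x | x ≠ 0} ⟨x₀, hx₀⟩
    have hx : x ≠ 0 := Function.argminOn_mem dim {x | x ≠ 0} ⟨x₀, hx₀⟩
    refine ⟨N x, hN.pos_s11 hx, fun y hy => not_lt.1 fun hlt => ?_⟩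
    have hsub : hN.sublevel htriv y < hN.sublevel htriv x := SetLike.lt_iff_le_and_exists.2
      ⟨fun z (hz : N z ≤ N y) => hz.trans hlt.le, x, le_refl (N x), not_le.2 hlt⟩
    exact Function.not_lt_argminOn dim {x | x ≠ 0} hy (Submodule.finrank_lt_finrank_of_lt hsub)
  · push Not at hV
    exact ⟨1, one_pos, fun v hv => absurd (hV v) hv⟩

lemma exists_pos_le_map_sub [CompleteSpace K] [FiniteDimensional K V] (hN : IsNAnorm K N)
    {W : Submodule K V} {v : V} (hv : v ∉ W) : ∃ δ > 0, ∀ w ∈ W, δ ≤ N (v - w) := by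
  by_cases htriv : ∀ a : K, a ≠ 0 → ‖a‖ = 1
  · obtain ⟨δ, hδ, hle⟩ := hN.exists_pos_le_of_norm_eq_one htriv
    exact ⟨δ, hδ, fun w hw => hle _ (sub_ne_zero.2 fun h => hv (h ▸ hw))⟩
  · push Not at htriv
    obtain ⟨a, ha0, ha1⟩ := htriv
    rcases ha1.lt_or_gt with ha | ha
    · refine hN.exists_pos_le_map_sub_of_one_lt_norm (a := a⁻¹) ?_ hv
      rw [norm_inv]
      exact (one_lt_inv₀ (norm_pos_iff.2 ha0)).2 ha
    · exact hN.exists_pos_le_map_sub_of_one_lt_norm ha hv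

lemma exists_notMem_forall_mul_le_map_sub [CompleteSpace K] [FiniteDimensional K V]
    (hN : IsNAnorm K N) {W : Submodule K V} (hW : W ≠ ⊤) {r : ℝ} (hr0 : 0 < r) (hr1 : r < 1) :
    ∃ x ∉ W, ∀ y ∈ W, r * N x ≤ N (x - y) := by
  obtain ⟨v, -, hv⟩ := SetLike.exists_of_lt hW.lt_top
  obtain ⟨δ, hδ, hδle⟩ := hN.exists_pos_le_map_sub hv
  set m := ⨅ w : W, N (v - w)
  have hm : δ ≤ m := le_ciInf fun w => hδle w w.2
  have hbdd : BddBelow (Set.range fun w : W => N (v - w)) :=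
    ⟨0, by rintro _ ⟨w, rfl⟩; exact hN.nonneg _⟩
  have hmr : m < m / r := by rw [lt_div_iff₀ hr0]; nlinarith
  obtain ⟨w₀, hw₀⟩ := exists_lt_of_ciInf_lt hmr
  refine ⟨v - w₀, fun h => hv (by simpa using add_mem h w₀.2), fun y hy => ?_⟩
  calc r * N (v - w₀) ≤ m := by rw [lt_div_iff₀' hr0] at hw₀; exact hw₀.le
    _ ≤ N (v - (w₀ + ⟨y, hy⟩ : W)) := ciInf_le hbdd _
    _ = N (v - w₀ - y) := by rw [Submodule.coe_add, sub_add_eq_sub_sub]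

end IsNAnorm

def IsAlmostOrthogonal (K : Type*) {V ι : Type*} [NormedField K] [AddCommGroup V] [Module K V]
    [Fintype ι] (N : V → ℝ) (c : ℝ) (f : ι → V) : Prop :=
  ∀ (a : ι → K) (i : ι), c * (‖a i‖ * N (f i)) ≤ N (∑ j, a j • f j)

section Orthogonal

variable {K V : Type*} [NormedField K] [AddCommGroup V] [Module K V] {N : V → ℝ}

lemma IsNAnorm.mul_le_map_add_smul (hN : IsNAnorm K N) {W : Submodule K V} {x u : V} {r : ℝ}
    (hr0 : 0 ≤ r) (hr1 : r ≤ 1) (hx : ∀ y ∈ W, r * N x ≤ N (x - y)) (hu : u ∈ W) (t : K) :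
    r * (‖t‖ * N x) ≤ N (u + t • x) ∧ r * N u ≤ N (u + t • x) := by
  have hx' : r * (‖t‖ * N x) ≤ N (u + t • x) := by
    rcases eq_or_ne t 0 with rfl | ht
    · simpa using hN.nonneg u
    have : u + t • x = t • (x - -(t⁻¹ • u)) := by
      rw [sub_neg_eq_add, smul_add, smul_inv_smul₀ ht, add_comm]
    rw [this, hN.map_smul, mul_left_comm]
    exact mul_le_mul_of_nonneg_left (hx _ (W.neg_mem (W.smul_mem _ hu))) (norm_nonneg t)
  refine ⟨hx', ?_⟩
  calc r * N u = r * N (u + t • x - t • x) := by rw [add_sub_cancel_right]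
    _ ≤ r * max (N (u + t • x)) (‖t‖ * N x) := by
      rw [← hN.map_smul]
      exact mul_le_mul_of_nonneg_left (hN.map_sub_le_max _ _) hr0
    _ ≤ N (u + t • x) := by
      rw [mul_max_of_nonneg _ _ hr0]
      exact max_le (mul_le_of_le_one_left (hN.nonneg _) hr1) hx'

lemma IsAlmostOrthogonal.snoc (hN : IsNAnorm K N) {n : ℕ} {f : Fin n → V} {c r : ℝ}
    (hf : IsAlmostOrthogonal K N c f) (hc : c ≤ 1) (hr0 : 0 ≤ r) (hr1 : r ≤ 1) {x : V}
    (hx : ∀ y ∈ Submodule.span K (Set.range f), r * N x ≤ N (x - y)) :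
    IsAlmostOrthogonal K N (r * c) (Fin.snoc f x : Fin (n + 1) → V) := by
  intro a i
  set u := ∑ j : Fin n, a j.castSucc • f j
  have hu : u ∈ Submodule.span K (Set.range f) :=
    Submodule.sum_mem _ fun j _ => Submodule.smul_mem _ _ (Submodule.subset_span ⟨j, rfl⟩)
  have hsum : ∑ j, a j • (Fin.snoc f x : Fin (n + 1) → V) j = u + a (Fin.last n) • x := by
    simp [Fin.sum_univ_castSucc, u]
  obtain ⟨hlast, hprev⟩ := hN.mul_le_map_add_smul hr0 hr1 hx hu (a (Fin.last n))
  rw [hsum]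
  induction i using Fin.lastCases with
  | last =>
    rw [Fin.snoc_last, mul_assoc]
    have hx0 : 0 ≤ ‖a (Fin.last n)‖ * N x := mul_nonneg (norm_nonneg _) (hN.nonneg x)
    exact (mul_le_mul_of_nonneg_left (mul_le_of_le_one_left hx0 hc) hr0).trans hlast
  | cast j =>
    rw [Fin.snoc_castSucc, mul_assoc]
    exact (mul_le_mul_of_nonneg_left (hf _ j) hr0).trans hprev

lemma IsAlmostOrthogonal.linearIndependent (hN : IsNAnorm K N) {ι : Type*} [Fintype ι]
    {f : ι → V} {c : ℝ} (hf : IsAlmostOrthogonal K N c f) (hc : 0 < c) (hf0 : ∀ i, f i ≠ 0) :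
    LinearIndependent K f := by
  refine Fintype.linearIndependent_iff.2 fun a ha i => ?_
  have := hf a i
  rw [ha, hN.map_zero] at this
  have : ‖a i‖ * N (f i) ≤ 0 := nonpos_of_mul_nonpos_right this hc
  exact norm_eq_zero.1
    (le_antisymm (nonpos_of_mul_nonpos_left this (hN.pos_s11 (hf0 i))) (norm_nonneg _))

lemma IsNAnorm.exists_isAlmostOrthogonal_fin [CompleteSpace K] [FiniteDimensional K V]
    (hN : IsNAnorm K N) {r : ℝ} (hr0 : 0 < r) (hr1 : r < 1) :
    ∀ n ≤ finrank K V, ∃ f : Fin n → V, (∀ i, f i ≠ 0) ∧ IsAlmostOrthogonal K N (r ^ n) f := by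
  intro n hn
  induction n with
  | zero => exact ⟨Fin.elim0, fun i => i.elim0, fun a i => i.elim0⟩
  | succ n ih =>
    obtain ⟨f, hf0, hf⟩ := ih (Nat.le_of_succ_le hn)
    have hW : Submodule.span K (Set.range f) ≠ ⊤ := fun h => by
      have := finrank_range_le_card (R := K) f
      rw [Set.finrank, h, finrank_top, Fintype.card_fin] at this
      omega
    obtain ⟨x, hxW, hx⟩ := hN.exists_notMem_forall_mul_le_map_sub hW hr0 hr1
    refine ⟨Fin.snoc f x, fun i => ?_, ?_⟩
    · induction i using Fin.lastCases with
      | last => simpa using fun h : x = 0 => hxW (h ▸ Submodule.zero_mem _)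
      | cast j => simpa using hf0 j
    · rw [pow_succ']
      exact hf.snoc hN (pow_le_one₀ hr0.le hr1.le) hr0.le hr1.le hx

lemma IsNAnorm.exists_basis_isAlmostOrthogonal [CompleteSpace K] [FiniteDimensional K V]
    (hN : IsNAnorm K N) {r : ℝ} (hr0 : 0 < r) (hr1 : r < 1) :
    ∃ b : Basis (Fin (finrank K V)) K V, IsAlmostOrthogonal K N (r ^ finrank K V) b := by
  obtain ⟨f, hf0, hf⟩ := hN.exists_isAlmostOrthogonal_fin hr0 hr1 _ le_rfl
  have hli := hf.linearIndependent hN (pow_pos hr0 _) hf0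
  refine ⟨basisOfLinearIndependentOfCardEqFinrank' f hli (Fintype.card_fin _), ?_⟩
  rwa [coe_basisOfLinearIndependentOfCardEqFinrank']

end Orthogonal

namespace Module.Basis

variable {K V ι : Type*} [NormedField K] [AddCommGroup V] [Module K V]
  (b : Basis ι K V) {w : ι → ℝ}

noncomputable def weightedSupNorm (w : ι → ℝ) (v : V) : ℝ := ⨆ i, ‖b.repr v i‖ * w i

lemma weightedSupNorm_le {v : V} {C : ℝ} (hC : 0 ≤ C) (h : ∀ i, ‖b.repr v i‖ * w i ≤ C) :
    b.weightedSupNorm w v ≤ C :=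
  Real.iSup_le h hC

lemma weightedSupNorm_nonneg (hw : ∀ i, 0 ≤ w i) (v : V) : 0 ≤ b.weightedSupNorm w v :=
  Real.iSup_nonneg fun i => mul_nonneg (norm_nonneg _) (hw i)

variable [Finite ι]

lemma le_weightedSupNorm (v : V) (i : ι) : ‖b.repr v i‖ * w i ≤ b.weightedSupNorm w v :=
  le_ciSup (f := fun i => ‖b.repr v i‖ * w i) (Set.finite_range _).bddAbove i

lemma weightedSupNorm_self (hw : ∀ i, 0 ≤ w i) (i : ι) : b.weightedSupNorm w (b i) = w i := by
  refine le_antisymm (b.weightedSupNorm_le (hw i) fun j => ?_) ?_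
  · rcases eq_or_ne j i with rfl | hji
    · simp
    · simpa [Finsupp.single_eq_of_ne hji] using hw i
  · simpa using b.le_weightedSupNorm (b i) i

lemma isNAnorm_weightedSupNorm [IsUltrametricDist K] (hw : ∀ i, 0 < w i) :
    IsNAnorm K (b.weightedSupNorm w) := by
  have hnonneg := b.weightedSupNorm_nonneg fun i => (hw i).le
  refine ⟨hnonneg, fun v => ⟨fun hv => b.ext_elem fun i => ?_, ?_⟩, fun a v => ?_, fun u v => ?_⟩
  · have := (b.le_weightedSupNorm v i).trans hv.le
    simpa using le_antisymm (nonpos_of_mul_nonpos_left this (hw i)) (norm_nonneg _)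
  · rintro rfl
    exact le_antisymm (b.weightedSupNorm_le le_rfl fun i => by simp) (hnonneg 0)
  · simp only [weightedSupNorm, map_smul, Finsupp.smul_apply, smul_eq_mul, norm_mul, mul_assoc]
    exact (Real.mul_iSup_of_nonneg (norm_nonneg a) _).symm
  · refine b.weightedSupNorm_le (le_max_of_le_left (hnonneg u)) fun i => ?_
    calc ‖b.repr (u + v) i‖ * w i ≤ max ‖b.repr u i‖ ‖b.repr v i‖ * w i := by
          rw [map_add, Finsupp.add_apply]
          exact mul_le_mul_of_nonneg_right (IsUltrametricDist.norm_add_le_max _ _) (hw i).le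
      _ = max (‖b.repr u i‖ * w i) (‖b.repr v i‖ * w i) := max_mul_of_nonneg _ _ (hw i).le
      _ ≤ _ := max_le_max (b.le_weightedSupNorm u i) (b.le_weightedSupNorm v i)

lemma isDiagonalizableNorm_weightedSupNorm (b : Basis (Fin (finrank K V)) K V)
    {w : Fin (finrank K V) → ℝ} (hw : ∀ i, 0 ≤ w i) :
    IsDiagonalizableNorm K (b.weightedSupNorm w) :=
  ⟨b, fun a => by simp only [b.weightedSupNorm_self hw]; rw [weightedSupNorm, b.repr_sum_self]⟩

end Module.Basis

section Comparison

variable {K V ι : Type*} [NormedField K] [AddCommGroup V] [Module K V] [Fintype ι] {N : V → ℝ}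

lemma IsNAnorm.le_weightedSupNorm (hN : IsNAnorm K N) (b : Basis ι K V) (v : V) :
    N v ≤ b.weightedSupNorm (fun i => N (b i)) v := by
  conv_lhs => rw [← b.sum_repr v]
  refine hN.map_sum_le _ _ (b.weightedSupNorm_nonneg (fun i => hN.nonneg _) v) fun i _ => ?_
  rw [hN.map_smul]
  exact b.le_weightedSupNorm (w := fun i => N (b i)) v i

lemma IsAlmostOrthogonal.mul_weightedSupNorm_le (hN : IsNAnorm K N) {b : Basis ι K V} {c : ℝ}
    (hb : IsAlmostOrthogonal K N c b) (hc : 0 ≤ c) (v : V) :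
    c * b.weightedSupNorm (fun i => N (b i)) v ≤ N v := by
  rw [Basis.weightedSupNorm, Real.mul_iSup_of_nonneg hc]
  refine Real.iSup_le (fun i => ?_) (hN.nonneg v)
  simpa only [b.sum_repr] using hb (b.repr v) i

end Comparison

lemma dInfty_le_of_le_of_le_exp_mul {V : Type*} [AddCommGroup V] {N N' : V → ℝ} {ε : ℝ}
    (hε : 0 ≤ ε) (hpos : ∀ v, v ≠ 0 → 0 < N v) (hle : ∀ v, N v ≤ N' v)
    (hle_exp : ∀ v, N' v ≤ Real.exp ε * N v) : dInfty N N' ≤ ε := by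
  refine Real.sSup_le ?_ hε
  rintro _ ⟨v, hv, rfl⟩
  have hN := hpos v hv
  have hlog₁ : Real.log (N v) ≤ Real.log (N' v) := Real.log_le_log hN (hle v)
  have hlog₂ : Real.log (N' v) ≤ ε + Real.log (N v) := by
    calc Real.log (N' v) ≤ Real.log (Real.exp ε * N v) :=
          Real.log_le_log (hN.trans_le (hle v)) (hle_exp v)
      _ = ε + Real.log (N v) := by rw [Real.log_mul (Real.exp_pos ε).ne' hN.ne', Real.log_exp]
  rw [abs_of_nonneg (sub_nonneg.2 hlog₁)]
  linarith

/-- Diagonalizable norms are dense in the space of all non-Archimedean norms on a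
finite-dimensional vector space, for the `d_∞` distance. -/
theorem diagonalizable_dense
    (K V : Type*) [NormedField K] [IsUltrametricDist K] [CompleteSpace K]
    [AddCommGroup V] [Module K V] [FiniteDimensional K V]
    (N : V → ℝ) (hN : IsNAnorm K N) :
    ∀ ε : ℝ, 0 < ε → ∃ Nε : V → ℝ, IsNAnorm K Nε ∧ IsDiagonalizableNorm K Nε ∧
      dInfty N Nε ≤ ε := by
  intro ε hε
  set d := finrank K V
  -- `r ^ d ≥ exp (-ε)`; dividing by `d + 1` rather than `d` keeps `r < 1` when `d = 0`
  set r := Real.exp (-ε / (d + 1))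
  have hr1 : r < 1 :=
    Real.exp_lt_one_iff.2 (div_neg_of_neg_of_pos (neg_lt_zero.2 hε) (by positivity))
  obtain ⟨b, hb⟩ := hN.exists_basis_isAlmostOrthogonal (Real.exp_pos _) hr1
  have hrd : Real.exp (-ε) ≤ r ^ d := by
    rw [← Real.exp_nat_mul, Real.exp_le_exp, mul_div_assoc', le_div_iff₀ (by positivity)]
    nlinarith
  have hNb : ∀ i, 0 < N (b i) := fun i => hN.pos_s11 (b.ne_zero i)
  refine ⟨b.weightedSupNorm (fun i => N (b i)), b.isNAnorm_weightedSupNorm hNb,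
    b.isDiagonalizableNorm_weightedSupNorm fun i => (hNb i).le,
    dInfty_le_of_le_of_le_exp_mul hε.le (fun v => hN.pos_s11) (hN.le_weightedSupNorm b) fun v => ?_⟩
  have hlower := (mul_le_mul_of_nonneg_right hrd
    (b.weightedSupNorm_nonneg (fun i => (hNb i).le) v)).trans
    (hb.mul_weightedSupNorm_le hN (by positivity) v)
  rwa [Real.exp_neg, inv_mul_le_iff₀ (Real.exp_pos ε)] at hlower
end
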